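/- Let G be a connected chordal graph with at least two maximal cliques. Every tree whose node set is the set of maximal cliques of G is a clique tree of G if and only if G has exactly one minimal vertex separator. -/

import Mathlib

namespace Chordal

variable {V : Type*} [Fintype V]

/-- A closed walk has a chord: an edge of `G` joining two support vertices that is
not an edge of the walk. -/
def HasChord (G : SimpleGraph V) {u : V} (c : G.Walk u u) : Prop :=
  ∃ v w, v ∈ c.support ∧ w ∈ c.support ∧ G.Adj v w ∧ s(v, w) ∉ c.edges

/-- A graph is chordal if every cycle of length at least 4 has a chord. -/
def IsChordal (G : SimpleGraph V) : Prop :=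
  ∀ ⦃u : V⦄ (c : G.Walk u u), c.IsCycle → 4 ≤ c.length → HasChord G c

/-- A maximal clique of `G`. -/
def IsMaxClique (G : SimpleGraph V) (s : Set V) : Prop :=
  G.IsClique s ∧ ∀ t : Set V, G.IsClique t → s ⊆ t → s = t

/-- A maximal clique of the induced subgraph `G(W)`. -/
def IsMaxCliqueOn (G : SimpleGraph V) (W s : Set V) : Prop :=
  s ⊆ W ∧ G.IsClique s ∧ ∀ t : Set V, t ⊆ W → G.IsClique t → s ⊆ t → s = t

/-- There is a walk from `u` to `w` staying inside `W` and avoiding `S`. -/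
def ReachWithin (G : SimpleGraph V) (W S : Set V) (u w : V) : Prop :=
  ∃ p : G.Walk u w, ∀ x ∈ p.support, x ∈ W ∧ x ∉ S

/-- `S` separates `u` from `w` in the induced subgraph `G(W)`. -/
def SeparatesOn (G : SimpleGraph V) (W S : Set V) (u w : V) : Prop :=
  u ∈ W ∧ w ∈ W ∧ u ∉ S ∧ w ∉ S ∧ u ≠ w ∧ ¬ ReachWithin G W S u w

/-- `S` is a minimal vertex separator of the induced subgraph `G(W)`:
for some pair `u, w` it is an inclusion-minimal set separating `u` from `w`. -/
def IsMinSeparatorOn (G : SimpleGraph V) (W S : Set V) : Prop :=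
  S ⊆ W ∧ ∃ u w, SeparatesOn G W S u w ∧ ∀ S' ⊂ S, ¬ SeparatesOn G W S' u w

/-- `S` is a minimal vertex separator of `G`. -/
def IsMinSeparator (G : SimpleGraph V) (S : Set V) : Prop :=
  IsMinSeparatorOn G Set.univ S

/-- `S` is inclusion-minimal among the minimal vertex separators of `G`. -/
def IsInclMinSeparator (G : SimpleGraph V) (S : Set V) : Prop :=
  IsMinSeparator G S ∧ ∀ S' : Set V, IsMinSeparator G S' → S' ⊆ S → S' = S

/-- `Γ` is a connected component of `G(V \ S)`. -/
def IsCompOutside (G : SimpleGraph V) (S Γ : Set V) : Prop :=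
  ∃ u, u ∉ S ∧ Γ = {w | ReachWithin G Set.univ S u w}

/-- A vertex is simplicial if its neighborhood is a clique. -/
def IsSimplicial (G : SimpleGraph V) (v : V) : Prop :=
  G.IsClique (G.neighborSet v)

/-- The simplicial component of a clique `C`: the simplicial vertices of `G` in `C`. -/
def Simp (G : SimpleGraph V) (C : Set V) : Set V :=
  {v ∈ C | IsSimplicial G v}

/-- The non-simplicial component of a clique `C`. -/
def Sep (G : SimpleGraph V) (C : Set V) : Set V :=
  C \ Simp G C

/-- `C` is a boundary clique (simply separated clique): a maximal clique such that
`Sep C = C ∩ C'` for some other maximal clique `C'`. -/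
def IsBoundaryClique (G : SimpleGraph V) (C : Set V) : Prop :=
  IsMaxClique G C ∧ ∃ C' : Set V, IsMaxClique G C' ∧ C' ≠ C ∧ Sep G C = C ∩ C'

/-- The induced subgraph on `W`, kept on the same vertex type. -/
def restrictS (G : SimpleGraph V) (W : Set V) : SimpleGraph V where
  Adj u v := G.Adj u v ∧ u ∈ W ∧ v ∈ W
  symm := ⟨fun u v ⟨h, hu, hv⟩ => ⟨h.symm, hv, hu⟩⟩
  loopless := ⟨fun u ⟨h, _, _⟩ => G.ne_of_adj h rfl⟩

/-- The vertex subset `A` induces a connected subgraph of `T`. -/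
def ConnOn {α : Type*} (T : SimpleGraph α) (A : Set α) : Prop :=
  A.Nonempty ∧ ∀ u ∈ A, ∀ v ∈ A, ∃ p : T.Walk u v, ∀ x ∈ p.support, x ∈ A

/-- The induced subgraph `G(W)` is complete. -/
def CompleteOn (G : SimpleGraph V) (W : Set V) : Prop :=
  ∀ u ∈ W, ∀ v ∈ W, u ≠ v → G.Adj u v

/-- A clique tree of `G`: a tree on the maximal cliques of `G` satisfying the
junction property. -/
def IsCliqueTree (G : SimpleGraph V) (T : SimpleGraph {s : Set V // IsMaxClique G s}) : Prop :=
  T.IsTree ∧ ∀ (C₁ C₂ : {s : Set V // IsMaxClique G s}) (p : T.Walk C₁ C₂), p.IsPath →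
    ∀ C₃ ∈ p.support, C₁.val ∩ C₂.val ⊆ C₃.val

/-- A leaf (endpoint) of a graph: a vertex with exactly one neighbor. -/
def IsLeaf {α : Type*} (T : SimpleGraph α) (a : α) : Prop :=
  ∃! b, T.Adj a b

/-- The union of the cliques preceding position `k` in a sequence. -/
def prefUnion {K : ℕ} (f : Fin K → Set V) (k : Fin K) : Set V :=
  {v | ∃ j, j < k ∧ v ∈ f j}

/-- A perfect sequence of the maximal cliques of the induced subgraph `G(W)`:
an enumeration of the maximal cliques of `G(W)` with the running intersection property. -/
def IsPerfectSeqOn (G : SimpleGraph V) (W : Set V) {K : ℕ} (f : Fin K → Set V) : Prop :=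
  Function.Injective f ∧ (∀ s : Set V, IsMaxCliqueOn G W s ↔ ∃ k, f k = s) ∧
  ∀ k : Fin K, 0 < (k : ℕ) →
    G.IsClique (prefUnion f k ∩ f k) ∧ ∃ k' : Fin K, k' < k ∧ prefUnion f k ∩ f k ⊆ f k'

/-- A perfect sequence of the maximal cliques of `G`. -/
def IsPerfectSeq (G : SimpleGraph V) {K : ℕ} (f : Fin K → Set V) : Prop :=
  Function.Injective f ∧ (∀ s : Set V, IsMaxClique G s ↔ ∃ k, f k = s) ∧
  ∀ k : Fin K, 0 < (k : ℕ) →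
    G.IsClique (prefUnion f k ∩ f k) ∧ ∃ k' : Fin K, k' < k ∧ prefUnion f k ∩ f k ⊆ f k'

/-- The closed neighborhood of a vertex. -/
def closedNbhd (G : SimpleGraph V) (v : V) : Set V :=
  insert v (G.neighborSet v)


/-!
Both sides are equivalent to: any two distinct maximal cliques meet inside every maximal clique.
For trees, the star centred at `C₃` contains the path `C₁ - C₃ - C₂`, which forces
`C₁ ∩ C₂ ⊆ C₃`; conversely that inclusion is all the junction property asks for.
For separators, under the condition a walk can leave a maximal clique `C` only through `C ∩ C'`,
so every minimal separator is such an intersection, and all these intersections coincide.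
Conversely, a unique minimal separator `S` separates every nonadjacent pair; hence it contains
the intersection of any two distinct maximal cliques and lies in every maximal clique.
-/

open SimpleGraph (Walk starGraph starGraph_adj isTree_starGraph)

section

variable {V : Type*}

def MaxCliquesMeetInAll (G : SimpleGraph V) : Prop :=
  ∀ C₁ C₂ C₃ : Set V, IsMaxClique G C₁ → IsMaxClique G C₂ → IsMaxClique G C₃ →
    C₁ ≠ C₂ → C₁ ∩ C₂ ⊆ C₃

variable {G : SimpleGraph V}

lemma exists_isMaxClique_superset [Finite V] {t : Set V} (ht : G.IsClique t) :
    ∃ s, IsMaxClique G s ∧ t ⊆ s := by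
  obtain ⟨s, hs, hmax⟩ := Set.Finite.exists_maximalFor id
    {s : Set V | G.IsClique s ∧ t ⊆ s} (Set.toFinite _) ⟨t, ht, subset_rfl⟩
  exact ⟨s, ⟨hs.1, fun t' ht' hst' => hst'.antisymm (hmax ⟨ht', hs.2.trans hst'⟩ hst')⟩, hs.2⟩

lemma exists_isMaxClique_mem [Finite V] (v : V) : ∃ s, IsMaxClique G s ∧ v ∈ s := by
  obtain ⟨s, hs, hsub⟩ := exists_isMaxClique_superset (G.isClique_singleton v)
  exact ⟨s, hs, hsub rfl⟩

lemma exists_isMaxClique_of_adj [Finite V] {x y : V} (h : G.Adj x y) :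
    ∃ s, IsMaxClique G s ∧ x ∈ s ∧ y ∈ s := by
  obtain ⟨s, hs, hsub⟩ := exists_isMaxClique_superset (SimpleGraph.isClique_pair.mpr fun _ => h)
  exact ⟨s, hs, hsub (Set.mem_insert _ _), hsub (Set.mem_insert_of_mem _ rfl)⟩

lemma exists_not_adj_of_not_mem {C : Set V} (hC : IsMaxClique G C) {s : V} (hs : s ∉ C) :
    ∃ t ∈ C, ¬ G.Adj s t := by
  by_contra! hadj
  have hcl : G.IsClique (insert s C) := hC.1.insert fun t ht _ => hadj t ht
  exact hs ((hC.2 _ hcl (Set.subset_insert _ _)) ▸ Set.mem_insert s C)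

lemma exists_not_adj_of_ne {C₁ C₂ : Set V} (h₁ : IsMaxClique G C₁) (h₂ : IsMaxClique G C₂)
    (hne : C₁ ≠ C₂) : ∃ a ∈ C₁, ∃ b ∈ C₂, a ≠ b ∧ ¬ G.Adj a b := by
  obtain ⟨a, haC₁, haC₂⟩ := Set.not_subset.1 fun hsub => hne (h₁.2 C₂ h₂.1 hsub)
  obtain ⟨b, hbC₂, hab⟩ := exists_not_adj_of_not_mem h₂ haC₂
  exact ⟨a, haC₁, b, hbC₂, fun h => haC₂ (h ▸ hbC₂), hab⟩

lemma ReachWithin.trans {W S : Set V} {a b c : V} (hab : ReachWithin G W S a b)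
    (hbc : ReachWithin G W S b c) : ReachWithin G W S a c := by
  obtain ⟨p, hp⟩ := hab
  obtain ⟨q, hq⟩ := hbc
  refine ⟨p.append q, fun x hx => ?_⟩
  rcases (Walk.mem_support_append_iff p q).1 hx with hx | hx
  exacts [hp x hx, hq x hx]

lemma reachWithin_of_isClique {W S C : Set V} (hC : G.IsClique C) {a b : V}
    (ha : a ∈ C) (hb : b ∈ C) (haW : a ∈ W) (hbW : b ∈ W) (haS : a ∉ S) (hbS : b ∉ S) :
    ReachWithin G W S a b := by
  by_cases hab : a = b
  · subst hab
    exact ⟨.nil, fun x hx => by simp_all⟩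
  · refine ⟨(hC ha hb hab).toWalk, fun x hx => ?_⟩
    simp only [SimpleGraph.Adj.toWalk, Walk.support_cons, Walk.support_nil,
      List.mem_cons, List.not_mem_nil, or_false] at hx
    rcases hx with rfl | rfl
    exacts [⟨haW, haS⟩, ⟨hbW, hbS⟩]

lemma inter_subset_of_separatesOn {S C₁ C₂ : Set V} {a b : V}
    (hsep : SeparatesOn G Set.univ S a b) (hC₁ : G.IsClique C₁) (hC₂ : G.IsClique C₂)
    (ha : a ∈ C₁) (hb : b ∈ C₂) : C₁ ∩ C₂ ⊆ S := by
  obtain ⟨-, -, haS, hbS, -, hreach⟩ := hsep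
  intro x hx
  by_contra hxS
  exact hreach <| (reachWithin_of_isClique hC₁ ha hx.1 (Set.mem_univ _) trivial haS hxS).trans
    (reachWithin_of_isClique hC₂ hx.2 hb (Set.mem_univ _) trivial hxS hbS)

lemma exists_isMinSeparator_separatesOn [Finite V] {a b : V} (hab : ¬ G.Adj a b) (hne : a ≠ b) :
    ∃ S, IsMinSeparator G S ∧ SeparatesOn G Set.univ S a b := by
  have hcompl : SeparatesOn G Set.univ (Set.univ \ {a, b}) a b := by
    refine ⟨trivial, trivial, by simp, by simp, hne, ?_⟩
    rintro ⟨p, hp⟩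
    cases p with
    | nil => exact hne rfl
    | @cons _ y _ h q =>
      have hy := (hp y (by simp)).2
      simp only [Set.mem_sdiff, Set.mem_univ, true_and, not_not, Set.mem_insert_iff,
        Set.mem_singleton_iff] at hy
      rcases hy with rfl | rfl
      exacts [G.ne_of_adj h rfl, hab h]
  obtain ⟨S, hS, hmin⟩ := Set.Finite.exists_minimalFor id
    {S : Set V | SeparatesOn G Set.univ S a b} (Set.toFinite _) ⟨_, hcompl⟩
  exact ⟨S, ⟨Set.subset_univ _, a, b, hS,
    fun S' hlt hsep => (ssubset_iff_subset_not_superset.1 hlt).2 (hmin hsep hlt.le)⟩, hS⟩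

lemma MaxCliquesMeetInAll.mem_of_walk [Finite V] (hG : MaxCliquesMeetInAll G) {Cu Cw : Set V}
    (hCu : IsMaxClique G Cu) (hCw : IsMaxClique G Cw) {a y : V} (p : G.Walk a y)
    (ha : a ∈ Cu) (hp : ∀ x ∈ p.support, x ∉ Cu ∩ Cw) : y ∈ Cu := by
  induction p with
  | nil => exact ha
  | @cons a x y h q ih =>
    obtain ⟨C, hC, haC, hxC⟩ := exists_isMaxClique_of_adj h
    have hCCu : C = Cu := by
      by_contra hne
      exact hp a (by simp) ⟨ha, hG C Cu Cw hC hCu hCw hne ⟨haC, ha⟩⟩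
    exact ih (hCCu ▸ hxC) fun x hx => hp x (by simp [hx])

lemma MaxCliquesMeetInAll.exists_eq_inter [Finite V] (hG : MaxCliquesMeetInAll G) {S : Set V}
    (hS : IsMinSeparator G S) :
    ∃ Cu Cw, IsMaxClique G Cu ∧ IsMaxClique G Cw ∧ Cu ≠ Cw ∧ S = Cu ∩ Cw := by
  obtain ⟨-, u, w, hsep, hmin⟩ := hS
  obtain ⟨-, -, huS, hwS, huw, hreach⟩ := hsep
  obtain ⟨Cu, hCu, huCu⟩ := exists_isMaxClique_mem (G := G) u
  obtain ⟨Cw, hCw, hwCw⟩ := exists_isMaxClique_mem (G := G) w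
  have hwCu : w ∉ Cu := fun h =>
    hreach (reachWithin_of_isClique hCu.1 huCu h trivial trivial huS hwS)
  have huCw : u ∉ Cw := fun h =>
    hreach (reachWithin_of_isClique hCw.1 h hwCw trivial trivial huS hwS)
  have hsep' : SeparatesOn G Set.univ (Cu ∩ Cw) u w :=
    ⟨trivial, trivial, fun h => huCw h.2, fun h => hwCu h.1, huw,
      fun ⟨p, hp⟩ => hwCu (hG.mem_of_walk hCu hCw p huCu fun x hx => (hp x hx).2)⟩
  have hsub : Cu ∩ Cw ⊆ S :=
    inter_subset_of_separatesOn ⟨trivial, trivial, huS, hwS, huw, hreach⟩ hCu.1 hCw.1 huCu hwCw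
  refine ⟨Cu, Cw, hCu, hCw, fun h => hwCu (h ▸ hwCw), ?_⟩
  by_contra hne
  exact hmin _ (Set.ssubset_iff_subset_ne.2 ⟨hsub, Ne.symm hne⟩) hsep'

lemma MaxCliquesMeetInAll.existsUnique_isMinSeparator [Finite V] (hG : MaxCliquesMeetInAll G)
    (hK : 1 < {s : Set V | IsMaxClique G s}.ncard) : ∃! S : Set V, IsMinSeparator G S := by
  obtain ⟨C₁, hC₁, C₂, hC₂, hne⟩ := (Set.one_lt_ncard (Set.toFinite _)).1 hK
  obtain ⟨a, -, b, -, hab, hnadj⟩ := exists_not_adj_of_ne hC₁ hC₂ hne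
  obtain ⟨S, hS, -⟩ := exists_isMinSeparator_separatesOn hnadj hab
  refine ⟨S, hS, fun S' hS' => ?_⟩
  obtain ⟨C₁, C₂, h₁, h₂, h₁₂, rfl⟩ := hG.exists_eq_inter hS'
  obtain ⟨C₃, C₄, h₃, h₄, h₃₄, rfl⟩ := hG.exists_eq_inter hS
  exact (Set.subset_inter (hG _ _ _ h₁ h₂ h₃ h₁₂) (hG _ _ _ h₁ h₂ h₄ h₁₂)).antisymm
    (Set.subset_inter (hG _ _ _ h₃ h₄ h₁ h₃₄) (hG _ _ _ h₃ h₄ h₂ h₃₄))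

lemma maxCliquesMeetInAll_of_existsUnique_isMinSeparator [Finite V]
    (huniq : ∃! S : Set V, IsMinSeparator G S) : MaxCliquesMeetInAll G := by
  obtain ⟨S, -, huniq⟩ := huniq
  have hS : ∀ {a b}, ¬ G.Adj a b → a ≠ b → SeparatesOn G Set.univ S a b := fun hab hne => by
    obtain ⟨S', hS', hsep⟩ := exists_isMinSeparator_separatesOn hab hne
    exact huniq S' hS' ▸ hsep
  have hS_sub : ∀ C, IsMaxClique G C → S ⊆ C := fun C hC s hsS => by
    by_contra hsC
    obtain ⟨t, htC, hst⟩ := exists_not_adj_of_not_mem hC hsC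
    exact (hS hst fun h => hsC (h ▸ htC)).2.2.1 hsS
  intro C₁ C₂ C₃ h₁ h₂ h₃ hne
  obtain ⟨a, ha, b, hb, hab, hnadj⟩ := exists_not_adj_of_ne h₁ h₂ hne
  exact (inter_subset_of_separatesOn (hS hnadj hab) h₁.1 h₂.1 ha hb).trans (hS_sub C₃ h₃)

lemma forall_isCliqueTree_iff_maxCliquesMeetInAll :
    (∀ T : SimpleGraph {s : Set V // IsMaxClique G s}, T.IsTree → IsCliqueTree G T) ↔
      MaxCliquesMeetInAll G := by
  constructor
  · intro htrees C₁ C₂ C₃ h₁ h₂ h₃ hne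
    let c₁ : {s : Set V // IsMaxClique G s} := ⟨C₁, h₁⟩
    let c₂ : {s : Set V // IsMaxClique G s} := ⟨C₂, h₂⟩
    let c₃ : {s : Set V // IsMaxClique G s} := ⟨C₃, h₃⟩
    by_cases h₃₁ : c₃ = c₁
    · rw [show C₃ = C₁ from congrArg Subtype.val h₃₁]
      exact Set.inter_subset_left
    by_cases h₃₂ : c₃ = c₂
    · rw [show C₃ = C₂ from congrArg Subtype.val h₃₂]
      exact Set.inter_subset_right
    have h₁₂ : c₁ ≠ c₂ := fun h => hne (congrArg Subtype.val h)
    let p : (starGraph c₃).Walk c₁ c₂ :=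
      .cons (starGraph_adj.2 ⟨Ne.symm h₃₁, .inr rfl⟩)
        (.cons (starGraph_adj.2 ⟨h₃₂, .inl rfl⟩) .nil)
    have hp : p.IsPath := by
      simp [p, Walk.cons_isPath_iff, h₁₂, h₃₂, Ne.symm h₃₁]
    exact (htrees _ (isTree_starGraph c₃)).2 c₁ c₂ p hp c₃ (by simp [p])
  · intro hG T hT
    refine ⟨hT, fun C₁ C₂ p hp C₃ hC₃ => ?_⟩
    by_cases h : C₁ = C₂
    · subst h
      obtain rfl : p = .nil := Walk.eq_nil_iff_nil.2 (Walk.isPath_iff_nil.1 hp)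
      obtain rfl : C₃ = C₁ := by simpa using hC₃
      exact Set.inter_subset_left
    · exact hG C₁.1 C₂.1 C₃.1 C₁.2 C₂.2 C₃.2 (fun he => h (Subtype.ext he))

end

theorem every_tree_is_cliqueTree_iff_unique_separator_general {V : Type*} [Fintype V]
    (G : SimpleGraph V)
    (hK : 1 < {s : Set V | IsMaxClique G s}.ncard) :
    (∀ T : SimpleGraph {s : Set V // IsMaxClique G s}, T.IsTree → IsCliqueTree G T) ↔
      (∃! S : Set V, IsMinSeparator G S) :=
  forall_isCliqueTree_iff_maxCliquesMeetInAll.trans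
    ⟨fun hG => hG.existsUnique_isMinSeparator hK,
      maxCliquesMeetInAll_of_existsUnique_isMinSeparator⟩

theorem every_tree_is_cliqueTree_iff_unique_separator {V : Type*} [Fintype V]
    (G : SimpleGraph V) (hconn : G.Connected) (hch : IsChordal G)
    (hK : 1 < {s : Set V | IsMaxClique G s}.ncard) :
    (∀ T : SimpleGraph {s : Set V // IsMaxClique G s}, T.IsTree → IsCliqueTree G T) ↔
      (∃! S : Set V, IsMinSeparator G S) :=
  every_tree_is_cliqueTree_iff_unique_separator_general G hK

end Chordal
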